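/- Let ξ : ℤ → {0,1} be a non-periodic Toeplitz sequence with period structure (p_ℓ)_{ℓ≥1}, Ω the associated odometer with Haar probability measure μ, and W = cl(U) the window constructed from ξ. Then μ(∂W) = 1 − lim_{ℓ→∞} D(p_ℓ), where ∂W denotes the topological boundary of W in Ω and the limit exists because D(p_ℓ) is nondecreasing and bounded by 1. -/

import Mathlib

open MeasureTheory Set Filter Topology

noncomputable section

instance (n : ℕ) : TopologicalSpace (ZMod n) := ⊥
instance (n : ℕ) : DiscreteTopology (ZMod n) := ⟨rfl⟩
instance (n : ℕ) : MeasurableSpace (ZMod n) := ⊤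

/-- The `p`-skeleton of a sequence `ξ : ℤ → {0,1}`:
the set of `p`-periodic positions of `ξ`. -/
def Per (ξ : ℤ → Fin 2) (p : ℕ) : Set ℤ := {k | ∀ n : ℤ, ξ (k + n * p) = ξ k}

/-- The density `D(p)` of the `p`-skeleton:
`D(p) = #(Per(p,ξ) ∩ [0, p-1]) / p`. -/
def skelDensity (ξ : ℤ → Fin 2) (p : ℕ) : ℝ :=
  ((Per ξ p ∩ Set.Ico (0 : ℤ) (p : ℤ)).ncard : ℝ) / p

/-- `ξ` is a Toeplitz sequence: every position is periodic for some period `p ≥ 1`. -/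
def IsToeplitz (ξ : ℤ → Fin 2) : Prop := ∀ k : ℤ, ∃ p : ℕ, 0 < p ∧ k ∈ Per ξ p

/-- `ξ` is non-periodic: no `p ≥ 1` is a period of the whole sequence. -/
def IsNonPeriodic (ξ : ℤ → Fin 2) : Prop := ∀ p : ℕ, 0 < p → ∃ k : ℤ, ξ (k + p) ≠ ξ k

/-- `(p ℓ)` is a period structure for `ξ`: the `p ℓ` are positive, each divides the
next, and the `p ℓ`-skeletons exhaust `ℤ`. -/
def IsPeriodStructure (ξ : ℤ → Fin 2) (p : ℕ → ℕ) : Prop :=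
  (∀ ℓ, 0 < p ℓ) ∧ (∀ ℓ, p ℓ ∣ p (ℓ + 1)) ∧ ∀ k : ℤ, ∃ ℓ, k ∈ Per ξ (p ℓ)

/-- The odometer associated with a scale `p`, i.e. the closed subgroup of
`∏ ℓ, ℤ/p ℓ ℤ` of sequences compatible under the canonical projections
(whenever `p ℓ ∣ p (ℓ+1)`, which holds for period structures). -/
def odometer (p : ℕ → ℕ) : AddSubgroup (Π ℓ, ZMod (p ℓ)) where
  carrier := {x | ∀ ℓ, ∀ h : p ℓ ∣ p (ℓ + 1), ZMod.castHom h (ZMod (p ℓ)) (x (ℓ + 1)) = x ℓ}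
  zero_mem' := by intro ℓ _; simp
  add_mem' := by intro a b ha hb ℓ h; simp only [Pi.add_apply, map_add, ha ℓ h, hb ℓ h]
  neg_mem' := by intro a ha ℓ h; simp only [Pi.neg_apply, map_neg, ha ℓ h]

/-- The distinguished element `e` of the odometer, whose `ℓ`-th coordinate is
`1 mod p ℓ`; its `n`-th multiple `n • e` has `ℓ`-th coordinate `n mod p ℓ`. -/
def odometerGen (p : ℕ → ℕ) : odometer p := ⟨fun _ => 1, fun _ _ => map_one _⟩

/-- `A_s(ℓ) = {k mod p ℓ : k ∈ Per (p ℓ, ξ), ξ k = s} ⊆ ℤ/p ℓ ℤ`. -/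
def Aset (ξ : ℤ → Fin 2) (p : ℕ → ℕ) (ℓ : ℕ) (s : Fin 2) : Set (ZMod (p ℓ)) :=
  {c | ∃ k : ℤ, k ∈ Per ξ (p ℓ) ∧ ξ k = s ∧ (k : ZMod (p ℓ)) = c}

/-- `U_ℓ = {x ∈ Ω : x ℓ ∈ A_1(ℓ)}`. -/
def UsetL (ξ : ℤ → Fin 2) (p : ℕ → ℕ) (ℓ : ℕ) : Set (odometer p) :=
  {x | (x : Π ℓ, ZMod (p ℓ)) ℓ ∈ Aset ξ p ℓ 1}

/-- `V_ℓ = {x ∈ Ω : x ℓ ∈ A_0(ℓ)}`. -/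
def VsetL (ξ : ℤ → Fin 2) (p : ℕ → ℕ) (ℓ : ℕ) : Set (odometer p) :=
  {x | (x : Π ℓ, ZMod (p ℓ)) ℓ ∈ Aset ξ p ℓ 0}

/-- `U = ⋃ ℓ, U_ℓ`. -/
def Uset (ξ : ℤ → Fin 2) (p : ℕ → ℕ) : Set (odometer p) := ⋃ ℓ, UsetL ξ p ℓ

/-- `V = ⋃ ℓ, V_ℓ`. -/
def Vset (ξ : ℤ → Fin 2) (p : ℕ → ℕ) : Set (odometer p) := ⋃ ℓ, VsetL ξ p ℓ

/-- The window `W = cl(U)` constructed from `ξ`. -/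
def Wset (ξ : ℤ → Fin 2) (p : ℕ → ℕ) : Set (odometer p) := closure (Uset ξ p)

/-!
Under Haar measure the coordinate `x ℓ` is uniformly distributed on `ℤ/p ℓ ℤ`, so the cylinder
`U_ℓ ∪ V_ℓ` over the `p ℓ`-skeleton has measure `D(p ℓ)`. These cylinders increase to `U ∪ V`,
so `D(p ℓ)` increases to `L = μ(U ∪ V)`. The sets `U` and `V` are open and disjoint, and a point
`x ∉ U ∪ V` lies in the closure of both: for every `m` the residue class `x m` is not
`p m`-periodic for `ξ`, so it contains integers `k` with `ξ k = 1` and with `ξ k = 0`, and these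
`k` (embedded in `Ω`) converge to `x`. Hence `∂W = Ω \ (U ∪ V)`, of measure `1 - L`.
-/

open scoped ENNReal

lemma Per.of_intCast_eq {ξ : ℤ → Fin 2} {q : ℕ} {k k' : ℤ} (hk : k ∈ Per ξ q)
    (h : (k' : ZMod q) = k) : k' ∈ Per ξ q ∧ ξ k' = ξ k := by
  obtain ⟨c, hc⟩ : (q : ℤ) ∣ k' - k := ((ZMod.intCast_eq_intCast_iff _ _ _).1 h).symm.dvd
  obtain rfl : k' = k + c * q := by linarith
  refine ⟨fun n => ?_, hk c⟩
  rw [add_assoc, ← add_mul, hk, hk]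

lemma Per.emod_mem {ξ : ℤ → Fin 2} {q : ℕ} {k : ℤ} (hk : k ∈ Per ξ q) : k % q ∈ Per ξ q :=
  (Per.of_intCast_eq hk (ZMod.intCast_mod k q)).1

lemma Per_subset_of_dvd {ξ : ℤ → Fin 2} {q r : ℕ} (h : q ∣ r) : Per ξ q ⊆ Per ξ r := by
  rintro k hk n
  obtain ⟨c, rfl⟩ := h
  convert hk (n * c) using 3
  push_cast
  ring

lemma ncard_inter_Ico_eq_ncard_image_intCast {S : Set ℤ} {q : ℕ} (hq : 0 < q)
    (hS : ∀ k ∈ S, k % q ∈ S) :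
    (S ∩ Ico 0 (q : ℤ)).ncard = ((Int.cast : ℤ → ZMod q) '' S).ncard := by
  have himage : (Int.cast : ℤ → ZMod q) '' (S ∩ Ico 0 (q : ℤ)) = Int.cast '' S := by
    refine (image_mono inter_subset_left).antisymm ?_
    rintro _ ⟨k, hk, rfl⟩
    exact ⟨k % q, ⟨hS k hk, Int.emod_nonneg k (by omega), Int.emod_lt_of_pos k (by omega)⟩,
      ZMod.intCast_mod k q⟩
  rw [← himage, InjOn.ncard_image]
  intro a ha b hb hab
  rwa [ZMod.intCast_eq_intCast_iff', Int.emod_eq_of_lt ha.2.1 ha.2.2,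
    Int.emod_eq_of_lt hb.2.1 hb.2.2] at hab

lemma skelDensity_eq_ncard_image {ξ : ℤ → Fin 2} {q : ℕ} (hq : 0 < q) :
    skelDensity ξ q = (((Int.cast : ℤ → ZMod q) '' Per ξ q).ncard : ℝ) / q := by
  rw [skelDensity, ncard_inter_Ico_eq_ncard_image_intCast hq fun k hk => Per.emod_mem hk]

instance AddSubgroup.instMeasurableAdd {G : Type*} [MeasurableSpace G] [AddGroup G]
    [MeasurableAdd G] (H : AddSubgroup G) : MeasurableAdd H where
  measurable_const_add c := ((measurable_const_add (c : G)).comp measurable_subtype_coe).subtype_mk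
  measurable_add_const c := ((measurable_add_const (c : G)).comp measurable_subtype_coe).subtype_mk

instance (n : ℕ) : MeasurableSingletonClass (ZMod n) := ⟨fun _ => trivial⟩

section UniformFibres

variable {G H : Type*} [AddGroup G] [MeasurableSpace G] [MeasurableAdd G] [AddGroup H]
  {μ : Measure G} [μ.IsAddLeftInvariant] {f : G →+ H}

lemma measure_preimage_singleton_eq_of_surjective (hf : Function.Surjective f) (c c' : H) :
    μ (f ⁻¹' {c}) = μ (f ⁻¹' {c'}) := by
  obtain ⟨g, hg⟩ := hf (c - c')
  rw [← measure_preimage_add μ g]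
  congr 1
  ext x
  simp only [mem_preimage, mem_singleton_iff, map_add, hg]
  rw [sub_eq_add_neg, add_assoc, add_eq_left, neg_add_eq_zero, eq_comm]

lemma measure_preimage_eq_ncard_div [Finite H] [MeasurableSpace H] [MeasurableSingletonClass H]
    [IsProbabilityMeasure μ] (hf : Function.Surjective f) (hfm : Measurable f) (S : Set H) :
    μ (f ⁻¹' S) = S.ncard / Nat.card H := by
  have := Fintype.ofFinite H
  have hpre : ∀ T : Finset H, ∑ c ∈ T, μ (f ⁻¹' {c}) = μ (f ⁻¹' T) :=
    fun T => sum_measure_preimage_singleton T fun c _ => hfm (measurableSet_singleton c)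
  have hfibre : ∀ c, μ (f ⁻¹' {c}) = (Nat.card H : ℝ≥0∞)⁻¹ := by
    intro c
    have hsum := hpre Finset.univ
    rw [Finset.coe_univ, preimage_univ, measure_univ,
      Finset.sum_congr rfl fun d _ => measure_preimage_singleton_eq_of_surjective hf d c,
      Finset.sum_const, Finset.card_univ, nsmul_eq_mul, ← Nat.card_eq_fintype_card] at hsum
    exact ENNReal.eq_inv_of_mul_eq_one_left (by rwa [mul_comm])
  rw [← S.toFinite.coe_toFinset, ← hpre, Finset.sum_congr rfl fun c _ => hfibre c,
    Finset.sum_const, nsmul_eq_mul, ncard_coe_finset, div_eq_mul_inv]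

end UniformFibres

lemma frontier_closure_eq_compl_union {X : Type*} [TopologicalSpace X] {U V : Set X}
    (hU : IsOpen U) (hV : IsOpen V) (hUV : Disjoint U V)
    (hdense : (U ∪ V)ᶜ ⊆ closure U ∩ closure V) : frontier (closure U) = (U ∪ V)ᶜ := by
  have hclU : closure U ⊆ Vᶜ := (hUV.closure_left hV).subset_compl_right
  have hint : interior (closure U) ⊆ (closure V)ᶜ := interior_compl (s := V) ▸ interior_mono hclU
  rw [frontier, closure_closure]
  refine Subset.antisymm (fun x ⟨hx, hxi⟩ => ?_) fun x hx => ⟨(hdense hx).1, fun hxi => ?_⟩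
  · rintro (hxU | hxV)
    · exact hxi (interior_maximal subset_closure hU hxU)
    · exact hclU hx hxV
  · exact hint hxi (hdense hx).2

def odometerProj (p : ℕ → ℕ) (ℓ : ℕ) : odometer p →+ ZMod (p ℓ) :=
  (Pi.evalAddMonoidHom (fun ℓ => ZMod (p ℓ)) ℓ).comp (odometer p).subtype

section Odometer

variable {p : ℕ → ℕ}

lemma odometerProj_zsmul_odometerGen (ℓ : ℕ) (k : ℤ) :
    odometerProj p ℓ (k • odometerGen p) = k := by
  simp [odometerProj, odometerGen]

lemma odometerProj_apply (ℓ : ℕ) (x : odometer p) :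
    odometerProj p ℓ x = (x : Π ℓ, ZMod (p ℓ)) ℓ :=
  rfl

lemma odometerProj_surjective (ℓ : ℕ) : Function.Surjective (odometerProj p ℓ) := fun c =>
  let ⟨k, hk⟩ := ZMod.intCast_surjective c
  ⟨k • odometerGen p, (odometerProj_zsmul_odometerGen ℓ k).trans hk⟩

lemma continuous_odometerProj (ℓ : ℕ) : Continuous (odometerProj p ℓ) :=
  (continuous_apply ℓ).comp continuous_subtype_val

lemma measurable_odometerProj (ℓ : ℕ) : Measurable (odometerProj p ℓ) :=
  (measurable_pi_apply ℓ).comp measurable_subtype_coe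

lemma intCast_eq_odometerProj_of_le (hd : ∀ ℓ, p ℓ ∣ p (ℓ + 1)) (x : odometer p) {i m : ℕ}
    (him : i ≤ m) {k : ℤ} (hk : (k : ZMod (p m)) = odometerProj p m x) :
    (k : ZMod (p i)) = odometerProj p i x := by
  induction him with
  | refl => exact hk
  | @step m _ ih =>
    refine ih ?_
    rw [odometerProj_apply, ← x.2 m (hd m), ← map_intCast
      (ZMod.castHom (hd m) (ZMod (p m))) k]
    exact congrArg _ hk

lemma tendsto_zsmul_odometerGen (hd : ∀ ℓ, p ℓ ∣ p (ℓ + 1)) {x : odometer p} {k : ℕ → ℤ}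
    (hk : ∀ m, (k m : ZMod (p m)) = odometerProj p m x) :
    Tendsto (fun m => k m • odometerGen p) atTop (𝓝 x) := by
  rw [tendsto_subtype_rng, tendsto_pi_nhds]
  intro i
  refine tendsto_const_nhds.congr' ?_
  filter_upwards [eventually_ge_atTop i] with m him
  change odometerProj p i x = odometerProj p i (k m • odometerGen p)
  rw [odometerProj_zsmul_odometerGen]
  exact (intCast_eq_odometerProj_of_le hd x him (hk m)).symm

end Odometer

def odometerSkeleton (ξ : ℤ → Fin 2) (p : ℕ → ℕ) (ℓ : ℕ) : Set (odometer p) :=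
  odometerProj p ℓ ⁻¹' (Int.cast '' Per ξ (p ℓ))

section Window

variable {ξ : ℤ → Fin 2} {p : ℕ → ℕ}

lemma UsetL_union_VsetL (ℓ : ℕ) : UsetL ξ p ℓ ∪ VsetL ξ p ℓ = odometerSkeleton ξ p ℓ := by
  ext x
  constructor
  · rintro (⟨k, hk, -, hx⟩ | ⟨k, hk, -, hx⟩) <;> exact ⟨k, hk, hx⟩
  · rintro ⟨k, hk, hx⟩
    rcases (by omega : ξ k = 1 ∨ ξ k = 0) with h | h
    · exact Or.inl ⟨k, hk, h, hx⟩
    · exact Or.inr ⟨k, hk, h, hx⟩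

lemma iUnion_odometerSkeleton : ⋃ ℓ, odometerSkeleton ξ p ℓ = Uset ξ p ∪ Vset ξ p := by
  simp only [← UsetL_union_VsetL, iUnion_union_distrib]
  rfl

lemma monotone_odometerSkeleton (hd : ∀ ℓ, p ℓ ∣ p (ℓ + 1)) :
    Monotone (odometerSkeleton ξ p) := by
  refine monotone_nat_of_le_succ fun ℓ x ⟨k, hk, hx⟩ => ?_
  obtain ⟨k', hk'⟩ := ZMod.intCast_surjective (odometerProj p (ℓ + 1) x)
  have hk'x := intCast_eq_odometerProj_of_le hd x ℓ.le_succ hk'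
  exact ⟨k', Per_subset_of_dvd (hd ℓ) (Per.of_intCast_eq hk (hk'x.trans hx.symm)).1, hk'⟩

lemma measureReal_odometerSkeleton (μ : Measure (odometer p)) [μ.IsAddLeftInvariant]
    [IsProbabilityMeasure μ] (ℓ : ℕ) [NeZero (p ℓ)] :
    (μ (odometerSkeleton ξ p ℓ)).toReal = skelDensity ξ (p ℓ) := by
  rw [odometerSkeleton, measure_preimage_eq_ncard_div (odometerProj_surjective ℓ)
    (measurable_odometerProj ℓ), skelDensity_eq_ncard_image (NeZero.pos _), ENNReal.toReal_div,
    Nat.card_zmod, ENNReal.toReal_natCast, ENNReal.toReal_natCast]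

lemma eq_of_intCast_eq_odometerProj (hd : ∀ ℓ, p ℓ ∣ p (ℓ + 1)) {x : odometer p} {ℓ m : ℕ}
    {k k' : ℤ} (hk : k ∈ Per ξ (p ℓ)) (hk' : k' ∈ Per ξ (p m))
    (hkx : (k : ZMod (p ℓ)) = odometerProj p ℓ x) (hk'x : (k' : ZMod (p m)) = odometerProj p m x) :
    ξ k = ξ k' := by
  rcases le_total ℓ m with h | h
  · exact (Per.of_intCast_eq hk ((intCast_eq_odometerProj_of_le hd x h hk'x).trans hkx.symm)).2.symm
  · exact (Per.of_intCast_eq hk' ((intCast_eq_odometerProj_of_le hd x h hkx).trans hk'x.symm)).2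

lemma disjoint_Uset_Vset (hd : ∀ ℓ, p ℓ ∣ p (ℓ + 1)) : Disjoint (Uset ξ p) (Vset ξ p) := by
  simp only [Uset, Vset, disjoint_iUnion_left, disjoint_iUnion_right]
  refine fun _ _ => disjoint_left.2 ?_
  rintro x ⟨k, hk, hks, hkx⟩ ⟨k', hk', hk's, hk'x⟩
  have := eq_of_intCast_eq_odometerProj hd hk hk' hkx hk'x
  omega

lemma exists_intCast_eq_of_notMem_odometerSkeleton {x : odometer p} {m : ℕ}
    (hx : x ∉ odometerSkeleton ξ p m) (s : Fin 2) :
    ∃ k : ℤ, (k : ZMod (p m)) = odometerProj p m x ∧ ξ k = s := by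
  by_contra! h
  obtain ⟨k, hk⟩ := ZMod.intCast_surjective (odometerProj p m x)
  refine hx ⟨k, fun n => ?_, hk⟩
  have h₁ := h (k + n * p m) (by simpa using hk)
  have h₂ := h k hk
  omega

lemma compl_subset_closure_iUnion_Aset (hd : ∀ ℓ, p ℓ ∣ p (ℓ + 1))
    (hexh : ∀ k : ℤ, ∃ ℓ, k ∈ Per ξ (p ℓ)) (s : Fin 2) :
    (Uset ξ p ∪ Vset ξ p)ᶜ ⊆ closure (⋃ ℓ, odometerProj p ℓ ⁻¹' Aset ξ p ℓ s) := by
  intro x hx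
  rw [← iUnion_odometerSkeleton, mem_compl_iff, mem_iUnion, not_exists] at hx
  choose k hkx hks using fun m => exists_intCast_eq_of_notMem_odometerSkeleton (hx m) s
  refine mem_closure_of_tendsto (tendsto_zsmul_odometerGen hd hkx) (.of_forall fun m => ?_)
  obtain ⟨ℓ, hℓ⟩ := hexh (k m)
  exact mem_iUnion.2 ⟨ℓ, k m, hℓ, hks m, (odometerProj_zsmul_odometerGen ℓ (k m)).symm⟩

lemma frontier_Wset (hd : ∀ ℓ, p ℓ ∣ p (ℓ + 1)) (hexh : ∀ k : ℤ, ∃ ℓ, k ∈ Per ξ (p ℓ)) :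
    frontier (Wset ξ p) = (Uset ξ p ∪ Vset ξ p)ᶜ :=
  frontier_closure_eq_compl_union
    (isOpen_iUnion fun ℓ => (isOpen_discrete _).preimage (continuous_odometerProj ℓ))
    (isOpen_iUnion fun ℓ => (isOpen_discrete _).preimage (continuous_odometerProj ℓ))
    (disjoint_Uset_Vset hd) fun _ hx =>
      ⟨compl_subset_closure_iUnion_Aset hd hexh 1 hx, compl_subset_closure_iUnion_Aset hd hexh 0 hx⟩

end Window

theorem toeplitz_boundary_measure_general (ξ : ℤ → Fin 2)
    (p : ℕ → ℕ) (hps : IsPeriodStructure ξ p)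
    (μ : Measure (odometer p)) (hμ : μ.IsAddHaarMeasure) (hμ1 : IsProbabilityMeasure μ) :
    ∃ L : ℝ, Tendsto (fun ℓ => skelDensity ξ (p ℓ)) atTop (𝓝 L) ∧
      Monotone (fun ℓ => skelDensity ξ (p ℓ)) ∧ (∀ ℓ, skelDensity ξ (p ℓ) ≤ 1) ∧
      μ (frontier (Wset ξ p)) = ENNReal.ofReal (1 - L) := by
  obtain ⟨hpos, hd, hexh⟩ := hps
  have (ℓ : ℕ) : NeZero (p ℓ) := ⟨(hpos ℓ).ne'⟩
  have hmono := monotone_odometerSkeleton (ξ := ξ) hd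
  have hUV : MeasurableSet (Uset ξ p ∪ Vset ξ p) := iUnion_odometerSkeleton ▸
    .iUnion fun ℓ => measurable_odometerProj ℓ (.of_discrete)
  simp only [← measureReal_odometerSkeleton μ]
  refine ⟨(μ (Uset ξ p ∪ Vset ξ p)).toReal, ?_, ?_, ?_, ?_⟩
  · rw [← iUnion_odometerSkeleton]
    exact (ENNReal.tendsto_toReal (measure_ne_top _ _)).comp (tendsto_measure_iUnion_atTop hmono)
  · exact fun a b h => ENNReal.toReal_mono (measure_ne_top _ _) (measure_mono (hmono h))
  · exact fun ℓ => ENNReal.toReal_le_of_le_ofReal zero_le_one (by simpa using prob_le_one)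
  · rw [frontier_Wset hd hexh, prob_compl_eq_one_sub hUV, ENNReal.ofReal_sub _ ENNReal.toReal_nonneg,
      ENNReal.ofReal_one, ENNReal.ofReal_toReal (measure_ne_top _ _)]

/-- For a non-periodic Toeplitz sequence `ξ` with period structure
`(p ℓ)`, the Haar probability measure `μ` of the associated odometer satisfies
`μ (∂W) = 1 - lim_ℓ D(p ℓ)`, the limit existing since `D(p ℓ)` is nondecreasing
and bounded by `1`. -/
theorem toeplitz_boundary_measure (ξ : ℤ → Fin 2) (hT : IsToeplitz ξ) (hNP : IsNonPeriodic ξ)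
    (p : ℕ → ℕ) (hps : IsPeriodStructure ξ p)
    (μ : Measure (odometer p)) (hμ : μ.IsAddHaarMeasure) (hμ1 : IsProbabilityMeasure μ) :
    ∃ L : ℝ, Tendsto (fun ℓ => skelDensity ξ (p ℓ)) atTop (𝓝 L) ∧
      Monotone (fun ℓ => skelDensity ξ (p ℓ)) ∧ (∀ ℓ, skelDensity ξ (p ℓ) ≤ 1) ∧
      μ (frontier (Wset ξ p)) = ENNReal.ofReal (1 - L) :=
  toeplitz_boundary_measure_general ξ p hps μ hμ hμ1
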